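/- arXiv:1706.01727 — 4 statements merged into one kernel-verified Lean document; each statement's English description precedes it below -/
import Mathlib

section
/- For every $\tau\in(2,3)$ and every $y>0$, the function $K(y)=\left(\frac{\tau-2}{\tau-1}\right)^2(1-e^{(1-\tau)y}) + \frac{\tau-2}{\tau-1}y - (1-e^{(2-\tau)y})$ is strictly positive. -/
open Real

theorem K_pos (τ : ℝ) (hτ : 2 < τ) (hτ3 : τ < 3) :
    ∀ y : ℝ, 0 < y →
      ((τ - 2) / (τ - 1)) ^ 2 * (1 - Real.exp ((1 - τ) * y))
        + (τ - 2) / (τ - 1) * y - (1 - Real.exp ((2 - τ) * y)) > 0 := by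
  intro y hy
  have hτ1 : (0:ℝ) < τ - 1 := by linarith
  set c : ℝ := (τ - 2) / (τ - 1) with hc
  let f : ℝ → ℝ := fun x => c ^ 2 * (1 - Real.exp ((1 - τ) * x)) + c * x - (1 - Real.exp ((2 - τ) * x))
  let g : ℝ → ℝ := fun x => c ^ 2 * (τ - 1) * Real.exp ((1 - τ) * x) + c - (τ - 2) * Real.exp ((2 - τ) * x)
  have hE1 : ∀ x : ℝ, HasDerivAt (fun x => Real.exp ((1 - τ) * x)) (Real.exp ((1 - τ) * x) * (1 - τ)) x := by
    intro x
    simpa using ((hasDerivAt_id x).const_mul (1 - τ)).exp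
  have hE2 : ∀ x : ℝ, HasDerivAt (fun x => Real.exp ((2 - τ) * x)) (Real.exp ((2 - τ) * x) * (2 - τ)) x := by
    intro x
    simpa using ((hasDerivAt_id x).const_mul (2 - τ)).exp
  have hdf : ∀ x : ℝ, HasDerivAt f (g x) x := by
    intro x
    have h1 : HasDerivAt (fun x => c ^ 2 * (1 - Real.exp ((1 - τ) * x)) + c * x)
        (c ^ 2 * (-(Real.exp ((1 - τ) * x) * (1 - τ))) + c) x := by
      exact (((hE1 x).const_sub 1).const_mul (c ^ 2)).add
        (by simpa using (hasDerivAt_id x).const_mul c)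
    have h2 := h1.sub ((hE2 x).const_sub 1)
    refine h2.congr_deriv ?_
    simp [g]
    ring
  have hdg : ∀ x : ℝ, HasDerivAt g ((τ - 2) ^ 2 * (Real.exp ((2 - τ) * x) - Real.exp ((1 - τ) * x))) x := by
    intro x
    have h1 := (((hE1 x).const_mul (c ^ 2 * (τ - 1))).add_const c).sub ((hE2 x).const_mul (τ - 2))
    refine h1.congr_deriv ?_
    symm
    have hcc : c ^ 2 * (τ - 1) ^ 2 = (τ - 2) ^ 2 := by
      rw [hc]; field_simp
    linear_combination Real.exp ((1 - τ) * x) * hcc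
  have hg0 : g 0 = 0 := by
    simp [g, hc]
    field_simp
    ring
  have hgmono : StrictMonoOn g (Set.Ici 0) := by
    apply strictMonoOn_of_deriv_pos (convex_Ici 0)
    · exact fun x _ => (hdg x).continuousAt.continuousWithinAt
    · intro x hx
      rw [interior_Ici] at hx
      rw [(hdg x).deriv]
      have hx' : 0 < x := hx
      have h2 : Real.exp ((1 - τ) * x) < Real.exp ((2 - τ) * x) := by
        apply Real.exp_lt_exp.mpr; nlinarith
      have h3 : (0:ℝ) < (τ - 2) ^ 2 := pow_pos (by linarith) 2
      nlinarith
  have hgpos : ∀ x : ℝ, 0 < x → 0 < g x := by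
    intro x hx
    have := hgmono (Set.self_mem_Ici) (Set.mem_Ici.mpr hx.le) hx
    linarith [hg0]
  have hfmono : StrictMonoOn f (Set.Ici 0) := by
    apply strictMonoOn_of_deriv_pos (convex_Ici 0)
    · exact fun x _ => (hdf x).continuousAt.continuousWithinAt
    · intro x hx
      rw [interior_Ici] at hx
      rw [(hdf x).deriv]
      exact hgpos x hx
  have hf0 : f 0 = 0 := by simp [f]
  have := hfmono (Set.self_mem_Ici) (Set.mem_Ici.mpr hy.le) hy
  rw [hf0] at this
  exact this
end

section
/- For $\tau\in(2,3)$ and $b>1$, the inequality $\frac{\tau-2}{\tau-1}\ln(b^2) + \left(\frac{\tau-2}{\tau-1}\right)^2\left(1-b^{2(1-\tau)}\right) \geq 1 - b^{-2(\tau-2)}$ holds. -/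
open Real

lemma key_aux (α : ℝ) (hα0 : 0 ≤ α) (hα1 : α ≤ 1) {s : ℝ} (hs : 0 ≤ s) :
    1 - Real.exp (-(α*s)) ≤ α*(1-α)*s + α^2*(1 - Real.exp (-s)) := by
  set F : ℝ → ℝ := fun t => α*(1-α)*t + α^2*(1 - Real.exp (-t)) + Real.exp (-(α*t)) - 1 with hFdef
  have hF : ∀ t : ℝ, HasDerivAt F (α*(1-α) + α^2*Real.exp (-t) - α*Real.exp (-(α*t))) t := by
    intro t
    have h1 : HasDerivAt (fun t : ℝ => Real.exp (-t)) (-Real.exp (-t)) t := by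
      simpa using (hasDerivAt_neg t).exp
    have h2 : HasDerivAt (fun t : ℝ => Real.exp (-(α*t))) (-(α*Real.exp (-(α*t)))) t := by
      have hlin : HasDerivAt (fun t : ℝ => -(α*t)) (-α) t := by
        simpa using (hasDerivAt_id t).const_mul (-α)
      convert hlin.exp using 1; ring
    have h3 : HasDerivAt (fun t : ℝ => α*(1-α)*t) (α*(1-α)) t := by
      simpa using (hasDerivAt_id t).const_mul (α*(1-α))
    have h4 : HasDerivAt (fun t : ℝ => α^2*(1 - Real.exp (-t))) (α^2*Real.exp (-t)) t := by
      simpa using (h1.const_sub 1).const_mul (α^2)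
    have := (((h3.add h4).add h2).sub_const 1)
    exact this.congr_deriv (by ring)
  have hderiv : ∀ t ∈ Set.Ici (0:ℝ), 0 ≤ deriv F t := by
    intro t _
    rw [(hF t).deriv]
    have hconv : Real.exp (-(α*t)) ≤ (1-α) * Real.exp 0 + α * Real.exp (-t) := by
      have := convexOn_exp.2 (Set.mem_univ (0:ℝ)) (Set.mem_univ (-t))
        (by linarith : (0:ℝ) ≤ 1 - α) hα0 (by ring)
      simpa [smul_eq_mul, mul_comm] using this
    have : α * Real.exp (-(α*t)) ≤ α * ((1-α) + α * Real.exp (-t)) := by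
      apply mul_le_mul_of_nonneg_left _ hα0
      simpa using hconv
    nlinarith [this]
  have hmono : MonotoneOn F (Set.Ici (0:ℝ)) := by
    apply monotoneOn_of_deriv_nonneg (convex_Ici 0)
    · exact fun t _ => ((hF t).continuousAt).continuousWithinAt
    · intro t _
      exact ((hF t).differentiableAt).differentiableWithinAt
    · intro t ht
      exact hderiv t (interior_subset ht)
  have h0 : F 0 = 0 := by simp [hFdef]
  have := hmono (Set.self_mem_Ici) hs hs
  rw [h0] at this
  have : 0 ≤ α*(1-α)*s + α^2*(1 - Real.exp (-s)) + Real.exp (-(α*s)) - 1 := this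
  linarith

theorem key_inequality (τ b : ℝ) (hτ : 2 < τ) (hτ3 : τ < 3) (hb : 1 < b) :
    (τ - 2) / (τ - 1) * Real.log (b ^ (2:ℝ))
      + ((τ - 2) / (τ - 1)) ^ 2 * (1 - b ^ (2 * (1 - τ)))
      ≥ 1 - b ^ (-2 * (τ - 2)) := by
  have hb0 : (0:ℝ) < b := lt_trans one_pos hb
  have hL : 0 < Real.log b := Real.log_pos hb
  have hτ1 : (0:ℝ) < τ - 1 := by linarith
  set α : ℝ := (τ - 2) / (τ - 1) with hα
  set s : ℝ := 2 * (τ - 1) * Real.log b with hsdef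
  have hs : 0 ≤ s := by positivity
  have hα0 : 0 ≤ α := div_nonneg (by linarith) (by linarith)
  have hα1 : α ≤ 1 := by
    rw [hα, div_le_one hτ1]; linarith
  have key := key_aux α hα0 hα1 hs
  have e1 : Real.log (b ^ (2:ℝ)) = 2 * Real.log b := Real.log_rpow hb0 2
  have e2 : b ^ (2 * (1 - τ)) = Real.exp (-s) := by
    rw [Real.rpow_def_of_pos hb0, hsdef]; ring_nf
  have e3 : b ^ (-2 * (τ - 2)) = Real.exp (-(α*s)) := by
    rw [Real.rpow_def_of_pos hb0, hα, hsdef]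
    congr 1
    field_simp
  have e4 : α*(1-α)*s = α * (2 * Real.log b) := by
    rw [hα, hsdef]
    field_simp
    ring
  rw [e1, e2, e3, ge_iff_le]
  calc 1 - Real.exp (-(α*s)) ≤ α*(1-α)*s + α^2*(1 - Real.exp (-s)) := key
    _ = α * (2 * Real.log b) + α^2*(1 - Real.exp (-s)) := by rw [e4]
end

section
/- Let $\tau\in(2,3)$ and for $s>1$ set $b=s^{(3-\tau)/(2(\tau-1))}$, $a=s^{-1/2}$, $C=\left(\frac{b^{\tau-3}-a^{3-\tau}}{3-\tau}\right)^2$, and $A=\frac{1}{b^2}\left(\frac{-\ln(b^2)}{(\tau-1)(\tau-2)}-\frac{1-b^{2(1-\tau)}}{(\tau-1)^2}+\frac{b^{2(\tau-2)}-1}{(\tau-2)^2}\right)$. Then $\lim_{s\to\infty}\frac{A+\frac{3-\tau}{\tau-2}C}{A+\frac{4-\tau}{\tau-2}C}=3-\tau$. -/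
open Real Filter

theorem AC_ratio_tendsto (τ : ℝ) (hτ : 2 < τ) (hτ3 : τ < 3) :
    Tendsto (fun s : ℝ =>
      let b := s ^ ((3 - τ) / (2 * (τ - 1)))
      let a := s ^ (-(1:ℝ)/2)
      let C := ((b ^ (τ - 3) - a ^ (3 - τ)) / (3 - τ)) ^ 2
      let A := (1 / b ^ (2:ℝ)) * (-Real.log (b ^ (2:ℝ)) / ((τ - 1) * (τ - 2))
        - (1 - b ^ (2 * (1 - τ))) / (τ - 1) ^ 2
        + (b ^ (2 * (τ - 2)) - 1) / (τ - 2) ^ 2)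
      (A + (3 - τ) / (τ - 2) * C) / (A + (4 - τ) / (τ - 2) * C))
      atTop (nhds (3 - τ)) := by
  have hd : (0:ℝ) < 3 - τ := by linarith
  have hc : (0:ℝ) < τ - 2 := by linarith
  have h1 : (0:ℝ) < τ - 1 := by linarith
  -- limits of the basic pieces (as functions of b → ∞)
  have hu0 : Tendsto (fun b : ℝ => b ^ (4 - 2*τ)) atTop (nhds 0) := by
    have := tendsto_rpow_neg_atTop (y := 2*τ - 4) (by linarith)
    simpa [show -(2*τ - 4) = 4 - 2*τ by ring] using this
  have hz0 : Tendsto (fun b : ℝ => b ^ (6 - 4*τ)) atTop (nhds 0) := by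
    have := tendsto_rpow_neg_atTop (y := 4*τ - 6) (by linarith)
    simpa [show -(4*τ - 6) = 6 - 4*τ by ring] using this
  have hv0 : Tendsto (fun b : ℝ => Real.log b * b ^ (4 - 2*τ)) atTop (nhds 0) := by
    have h := (isLittleO_log_rpow_atTop
      (show (0:ℝ) < 2*τ - 4 by linarith)).tendsto_div_nhds_zero
    refine h.congr' ?_
    filter_upwards [eventually_gt_atTop 0] with b hb
    rw [show (4 - 2*τ) = -(2*τ - 4) by ring, Real.rpow_neg hb.le, div_eq_mul_inv]
  -- limits of the rescaled A and C
  have hF1 : Tendsto (fun b : ℝ =>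
      -2*(Real.log b * b ^ (4 - 2*τ))/((τ-1)*(τ-2))
        - (b ^ (4 - 2*τ) - b ^ (6 - 4*τ))/(τ-1)^2
        + (1 - b ^ (4 - 2*τ))/(τ-2)^2) atTop (nhds (((τ-2)^2)⁻¹)) := by
    have t1 := (hv0.const_mul (-2:ℝ)).div_const ((τ-1)*(τ-2))
    have t2 := (hu0.sub hz0).div_const ((τ-1)^2)
    have t3 := (tendsto_const_nhds (x := (1:ℝ)).sub hu0).div_const ((τ-2)^2)
    have := (t1.sub t2).add t3
    simpa [one_div] using this
  have hCm : Tendsto (fun b : ℝ => ((1 - b ^ (4 - 2*τ))/(3-τ))^2) atTop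
      (nhds (((3-τ)^2)⁻¹)) := by
    have := ((tendsto_const_nhds (x := (1:ℝ)).sub hu0).div_const (3-τ)).pow 2
    simpa [one_div, inv_pow] using this
  -- the key limit in terms of b
  have hD0 : ((τ-2)^2)⁻¹ + (4-τ)/(τ-2) * ((3-τ)^2)⁻¹ ≠ 0 := by
    have h4 : (0:ℝ) < 4 - τ := by linarith
    positivity
  have key : Tendsto (fun b : ℝ =>
      ((-2*(Real.log b * b ^ (4 - 2*τ))/((τ-1)*(τ-2))
        - (b ^ (4 - 2*τ) - b ^ (6 - 4*τ))/(τ-1)^2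
        + (1 - b ^ (4 - 2*τ))/(τ-2)^2)
        + (3-τ)/(τ-2) * ((1 - b ^ (4 - 2*τ))/(3-τ))^2)
      / ((-2*(Real.log b * b ^ (4 - 2*τ))/((τ-1)*(τ-2))
        - (b ^ (4 - 2*τ) - b ^ (6 - 4*τ))/(τ-1)^2
        + (1 - b ^ (4 - 2*τ))/(τ-2)^2)
        + (4-τ)/(τ-2) * ((1 - b ^ (4 - 2*τ))/(3-τ))^2))
      atTop (nhds (3 - τ)) := by
    have hN := hF1.add (hCm.const_mul ((3-τ)/(τ-2)))
    have hD := hF1.add (hCm.const_mul ((4-τ)/(τ-2)))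
    have := hN.div hD hD0
    have hval : (((τ-2)^2)⁻¹ + (3-τ)/(τ-2) * ((3-τ)^2)⁻¹)
        / (((τ-2)^2)⁻¹ + (4-τ)/(τ-2) * ((3-τ)^2)⁻¹) = 3 - τ := by
      rw [div_eq_iff hD0]
      field_simp
      ring
    rwa [hval] at this
  -- compose with s ↦ s ^ ((3-τ)/(2*(τ-1)))
  have hβ : (0:ℝ) < (3 - τ) / (2 * (τ - 1)) := by positivity
  have comp := key.comp (tendsto_rpow_atTop hβ)
  refine comp.congr' ?_
  filter_upwards [eventually_ge_atTop 1] with s hs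
  simp only [Function.comp_apply]
  have hs0 : (0:ℝ) ≤ s := le_trans zero_le_one hs
  set b := s ^ ((3 - τ) / (2 * (τ - 1))) with hbdef
  have hb : (0:ℝ) < b := Real.rpow_pos_of_pos (lt_of_lt_of_le one_pos hs) _
  -- basic rpow identities
  have e1 : b ^ (τ-3) * b ^ (3-τ) = 1 := by
    rw [← Real.rpow_add hb, show (τ-3)+(3-τ) = (0:ℝ) by ring, Real.rpow_zero]
  have e2 : b ^ (1-τ) * b ^ (3-τ) = b ^ (4 - 2*τ) := by
    rw [← Real.rpow_add hb, show (1-τ)+(3-τ) = 4-2*τ by ring]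
  have e4 : b ^ (2*(1-τ)) * b ^ (4 - 2*τ) = b ^ (6 - 4*τ) := by
    rw [← Real.rpow_add hb, show 2*(1-τ)+(4-2*τ) = 6-4*τ by ring]
  have e5 : b ^ (2*(τ-2)) * b ^ (4 - 2*τ) = 1 := by
    rw [← Real.rpow_add hb, show 2*(τ-2)+(4-2*τ) = (0:ℝ) by ring, Real.rpow_zero]
  have e6 : Real.log (b ^ (2:ℝ)) = 2 * Real.log b := Real.log_rpow hb 2
  have hm2 : b ^ (2*(3-τ)) / b ^ (2:ℝ) = b ^ (4 - 2*τ) := by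
    rw [← Real.rpow_sub hb, show 2*(3-τ)-(2:ℝ) = 4-2*τ by ring]
  have hmsq : b ^ (2*(3-τ)) = b ^ (3-τ) * b ^ (3-τ) := by
    rw [← Real.rpow_add hb, show (3-τ)+(3-τ) = 2*(3-τ) by ring]
  have hb2 : b ^ (2:ℝ) ≠ 0 := (Real.rpow_pos_of_pos hb 2).ne'
  have hm : (0:ℝ) < b ^ (2*(3-τ)) := Real.rpow_pos_of_pos hb _
  have ha : (s ^ (-(1:ℝ)/2)) ^ (3-τ) = b ^ (1-τ) := by
    rw [hbdef, ← Real.rpow_mul hs0, ← Real.rpow_mul hs0]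
    congr 1
    field_simp
    ring
  -- rescaled C
  have hC : ((b ^ (τ-3) - (s ^ (-(1:ℝ)/2)) ^ (3-τ)) / (3-τ))^2 * b ^ (2*(3-τ))
      = ((1 - b ^ (4 - 2*τ))/(3-τ))^2 := by
    rw [ha, hmsq]
    calc ((b ^ (τ-3) - b ^ (1-τ)) / (3-τ))^2 * (b ^ (3-τ) * b ^ (3-τ))
        = ((b ^ (τ-3) * b ^ (3-τ) - b ^ (1-τ) * b ^ (3-τ)) / (3-τ))^2 := by ring
      _ = ((1 - b ^ (4 - 2*τ))/(3-τ))^2 := by rw [e1, e2]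
  -- rescaled A
  have hA : ((1 / b ^ (2:ℝ)) * (-Real.log (b ^ (2:ℝ)) / ((τ - 1) * (τ - 2))
        - (1 - b ^ (2 * (1 - τ))) / (τ - 1) ^ 2
        + (b ^ (2 * (τ - 2)) - 1) / (τ - 2) ^ 2)) * b ^ (2*(3-τ))
      = -2*(Real.log b * b ^ (4 - 2*τ))/((τ-1)*(τ-2))
        - (b ^ (4 - 2*τ) - b ^ (6 - 4*τ))/(τ-1)^2
        + (1 - b ^ (4 - 2*τ))/(τ-2)^2 := by
    rw [e6]
    have expand : ((1 / b ^ (2:ℝ)) * (-(2 * Real.log b) / ((τ - 1) * (τ - 2))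
          - (1 - b ^ (2 * (1 - τ))) / (τ - 1) ^ 2
          + (b ^ (2 * (τ - 2)) - 1) / (τ - 2) ^ 2)) * b ^ (2*(3-τ))
        = (-(2 * Real.log b) / ((τ - 1) * (τ - 2))
          - (1 - b ^ (2 * (1 - τ))) / (τ - 1) ^ 2
          + (b ^ (2 * (τ - 2)) - 1) / (τ - 2) ^ 2) * (b ^ (2*(3-τ)) / b ^ (2:ℝ)) := by
      ring
    rw [expand, hm2]
    have h1' : (τ - 1) ≠ 0 := h1.ne'
    have hc' : (τ - 2) ≠ 0 := hc.ne'
    linear_combination (1/(τ-1)^2) * e4 + (1/(τ-2)^2) * e5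
  -- put it together
  rw [← hC, ← hA]
  rw [show (2*(1-τ)) = 2 * (1 - τ) by ring]
  set A := ((1 / b ^ (2:ℝ)) * (-Real.log (b ^ (2:ℝ)) / ((τ - 1) * (τ - 2))
        - (1 - b ^ (2 * (1 - τ))) / (τ - 1) ^ 2
        + (b ^ (2 * (τ - 2)) - 1) / (τ - 2) ^ 2)) with hAdef
  set C := ((b ^ (τ-3) - (s ^ (-(1:ℝ)/2)) ^ (3-τ)) / (3-τ))^2 with hCdef
  rw [show A * b ^ (2*(3-τ)) + (3-τ)/(τ-2) * (C * b ^ (2*(3-τ)))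
      = (A + (3-τ)/(τ-2) * C) * b ^ (2*(3-τ)) by ring,
    show A * b ^ (2*(3-τ)) + (4-τ)/(τ-2) * (C * b ^ (2*(3-τ)))
      = (A + (4-τ)/(τ-2) * C) * b ^ (2*(3-τ)) by ring,
    mul_div_mul_right _ _ hm.ne']
end

section
/- Let $\tau\in(2,3)$, $b>1$, and $a=b^{-(\tau-1)/(3-\tau)}$ (so $b^{1-\tau}=a^{3-\tau}$). With $A$ and $C$ as in the exact clustering derivative formula, and $A_{as}=\frac{b^{2(\tau-3)}}{(\tau-2)^2}$, $C_{as}=\frac{b^{2(\tau-3)}}{(3-\tau)^2}$, the inequality $\frac{C_{as}}{C}\leq\frac{A_{as}}{A}$ holds; concretely: $\left(1-b^{-2(\tau-2)}\right)^2 \geq 1-b^{-2(\tau-2)}-b^{-2(\tau-2)}\left[\frac{\tau-2}{\tau-1}\ln(b^2)+\left(\frac{\tau-2}{\tau-1}\right)^2\left(1-b^{2(1-\tau)}\right)\right]$. -/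
open Real

private lemma key_nonneg (r : ℝ) (hr0 : 0 < r) (m : ℝ) (hm : 0 ≤ m) :
    0 ≤ r/(r+1) * m + (r/(r+1))^2 * (1 - Real.exp (-((r+1)*m)))
      + Real.exp (-(r*m)) - 1 := by
  set c := r / (r+1) with hc
  have hr1 : (0:ℝ) < r + 1 := by linarith
  set F : ℝ → ℝ := fun t => c*t + c^2*(1 - Real.exp (-((r+1)*t))) + Real.exp (-(r*t)) - 1
    with hF
  have hderiv : ∀ x : ℝ, HasDerivAt F
      (c + c^2*((r+1)*Real.exp (-((r+1)*x))) - r*Real.exp (-(r*x))) x := by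
    intro x
    have h1 : HasDerivAt (fun t : ℝ => c*t) c x := by
      simpa using (hasDerivAt_id x).const_mul c
    have h2 : HasDerivAt (fun t : ℝ => -((r+1)*t)) (-(r+1)) x := by
      simpa using ((hasDerivAt_id x).const_mul (r+1)).fun_neg
    have h2' := h2.exp
    have h3 : HasDerivAt (fun t : ℝ => c^2*(1 - Real.exp (-((r+1)*t))))
        (c^2 * (0 - Real.exp (-((r+1)*x)) * -(r+1))) x :=
      ((hasDerivAt_const x (1:ℝ)).sub h2').const_mul (c^2)
    have h4 : HasDerivAt (fun t : ℝ => -(r*t)) (-r) x := by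
      simpa using ((hasDerivAt_id x).const_mul r).fun_neg
    have h4' := h4.exp
    have := ((h1.add h3).add h4').sub_const 1
    exact this.congr_deriv (by ring)
  have hderiv_nonneg : ∀ x : ℝ, 0 ≤ x →
      0 ≤ c + c^2*((r+1)*Real.exp (-((r+1)*x))) - r*Real.exp (-(r*x)) := by
    intro x hx
    have hP : (0:ℝ) < Real.exp (r*x) := Real.exp_pos _
    have hE1 : Real.exp (-((r+1)*x)) * Real.exp (r*x) = Real.exp (-x) := by
      rw [← Real.exp_add]; ring_nf
    have hE2 : Real.exp (-(r*x)) * Real.exp (r*x) = 1 := by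
      rw [← Real.exp_add]; ring_nf; exact Real.exp_zero
    have ha : r*x + 1 ≤ Real.exp (r*x) := Real.add_one_le_exp (r*x)
    have hb : -x + 1 ≤ Real.exp (-x) := Real.add_one_le_exp (-x)
    have hkey : r + 1 ≤ Real.exp (r*x) + r * Real.exp (-x) := by nlinarith
    have hgoal : (c + c^2*((r+1)*Real.exp (-((r+1)*x))) - r*Real.exp (-(r*x)))
        * ((r+1)^2 * Real.exp (r*x))
        = r*(r+1)*Real.exp (r*x)
          + r^2*(r+1)*(Real.exp (-((r+1)*x)) * Real.exp (r*x))
          - r*(r+1)^2*(Real.exp (-(r*x)) * Real.exp (r*x)) := by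
      rw [hc]; field_simp
    have h2 : 0 ≤ (c + c^2*((r+1)*Real.exp (-((r+1)*x))) - r*Real.exp (-(r*x)))
        * ((r+1)^2 * Real.exp (r*x)) := by
      rw [hgoal, hE1, hE2]; nlinarith
    have hpos : (0:ℝ) < (r+1)^2 * Real.exp (r*x) := by positivity
    nlinarith [h2, hpos]
  have hmono : MonotoneOn F (Set.Ici (0:ℝ)) := by
    apply monotoneOn_of_deriv_nonneg (convex_Ici 0)
    · exact fun x _ => ((hderiv x).continuousAt).continuousWithinAt
    · intro x hx
      exact ((hderiv x).differentiableAt).differentiableWithinAt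
    · intro x hx
      rw [(hderiv x).deriv]
      exact hderiv_nonneg x (le_of_lt (by simpa using hx))
  have h0 : F 0 = 0 := by simp [hF]
  have := hmono (Set.self_mem_Ici) (Set.mem_Ici.mpr hm) hm
  rw [h0] at this
  simpa [hF] using this

theorem concrete_inequality (τ b : ℝ) (hτ : 2 < τ) (hτ3 : τ < 3) (hb : 1 < b) :
    (1 - b ^ (-2 * (τ - 2))) ^ 2 ≥
      1 - b ^ (-2 * (τ - 2)) - b ^ (-2 * (τ - 2)) *
        ((τ - 2) / (τ - 1) * Real.log (b ^ (2:ℝ))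
          + ((τ - 2) / (τ - 1)) ^ 2 * (1 - b ^ (2 * (1 - τ)))) := by
  have hb0 : (0:ℝ) < b := lt_trans one_pos hb
  set r := τ - 2 with hr
  have hr0 : 0 < r := by rw [hr]; linarith
  set m := 2 * Real.log b with hm
  have hlb : 0 < Real.log b := Real.log_pos hb
  have hm0 : 0 ≤ m := by positivity
  have hx : b ^ (-2 * (τ - 2)) = Real.exp (-(r * m)) := by
    rw [Real.rpow_def_of_pos hb0]; congr 1; rw [hr, hm]; ring
  have hy : b ^ (2 * (1 - τ)) = Real.exp (-((r+1) * m)) := by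
    rw [Real.rpow_def_of_pos hb0]; congr 1; rw [hr, hm]; ring
  have hlog : Real.log (b ^ (2:ℝ)) = m := by
    rw [Real.log_rpow hb0, hm]
  have hτ1 : τ - 1 = r + 1 := by rw [hr]; ring
  rw [hx, hy, hlog, hτ1]
  nlinarith [key_nonneg r hr0 m hm0, Real.exp_pos (-(r*m)),
    mul_nonneg (Real.exp_pos (-(r*m))).le (key_nonneg r hr0 m hm0)]
end
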